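/- Let F(0) ⊂ S^{2k+1} be the Voronoi fiber of γ_{2k+1}(0) and T_t the family of rotations with T_{±π} = −id and F(t) = T_t(F(0)). Fix δ ∈ [0,π]. If for all q, q' ∈ F(0) and all t with |t| ∈ [δ, π] one has d_1(0,t) ≤ d_{2k+1}(q, T_t q') + δ (condition B(δ)), then for all q, q' ∈ F(0) and all t with |t| ≤ π − δ one has d_{2k+1}(q, T_t q') ≤ d_1(0,t) + δ (condition A(δ)). -/

import Mathlib

open Real
open scoped RealInnerProductSpace

/-- The symmetric trigonometric moment curve `γ_{2k+1} : ℝ → ℝ^{2k+2}`. -/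
noncomputable def gammaTMC (k : ℕ) (t : ℝ) : EuclideanSpace ℝ (Fin (2 * k + 2)) :=
  WithLp.toLp 2 fun i : Fin (2 * k + 2) =>
    (if i.val % 2 = 0 then Real.cos ((2 * (i.val / 2 : ℕ) + 1) * t)
     else Real.sin ((2 * (i.val / 2 : ℕ) + 1) * t)) / Real.sqrt (k + 1)

/-- The block-diagonal rotation `T_t` of `ℝ^{2k+2}` with `2×2` rotation blocks of
angles `(2ℓ+1)t`, `ℓ = 0, …, k`. -/
noncomputable def blockRot (k : ℕ) (t : ℝ)
    (x : EuclideanSpace ℝ (Fin (2 * k + 2))) : EuclideanSpace ℝ (Fin (2 * k + 2)) :=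
  WithLp.toLp 2 fun i : Fin (2 * k + 2) =>
    let m : ℕ := i.val / 2
    let a : ℝ := (2 * m + 1) * t
    if i.val % 2 = 0 then
      Real.cos a * x ⟨2 * m, by omega⟩ + Real.sin a * x ⟨2 * m + 1, by omega⟩
    else
      -Real.sin a * x ⟨2 * m, by omega⟩ + Real.cos a * x ⟨2 * m + 1, by omega⟩

/-- The geodesic distance on the unit sphere: `d(x,y) = arccos(x·y)`. -/
noncomputable def sphDist {n : ℕ} (x y : EuclideanSpace ℝ (Fin n)) : ℝ :=
  Real.arccos ⟪x, y⟫

/-- The Voronoi fiber `F(0) = {x ∈ S^{2k+1} : x·γ(0) ≥ x·γ(s) ∀ s}`. -/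
def fiberTMC (k : ℕ) : Set (EuclideanSpace ℝ (Fin (2 * k + 2))) :=
  {x | ‖x‖ = 1 ∧ ∀ s : ℝ, ⟪x, gammaTMC k s⟫ ≤ ⟪x, gammaTMC k 0⟫}

lemma blockRot_add_pi (k : ℕ) (t : ℝ) (x : EuclideanSpace ℝ (Fin (2 * k + 2))) :
    blockRot k (t + π) x = -blockRot k t x := by
  ext i
  show _ = -(blockRot k t x i)
  simp only [blockRot]
  set m : ℕ := i.val / 2 with hm
  have key : ((2 * m + 1 : ℕ) : ℝ) * (t + π) = ((2 * m + 1 : ℕ) : ℝ) * t + π + m * (2 * π) := by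
    push_cast; ring
  have hc : Real.cos (((2 * m + 1 : ℕ) : ℝ) * (t + π)) = -Real.cos (((2 * m + 1 : ℕ) : ℝ) * t) := by
    rw [key, Real.cos_add_nat_mul_two_pi, Real.cos_add_pi]
  have hs : Real.sin (((2 * m + 1 : ℕ) : ℝ) * (t + π)) = -Real.sin (((2 * m + 1 : ℕ) : ℝ) * t) := by
    rw [key, Real.sin_add_nat_mul_two_pi, Real.sin_add_pi]
  push_cast at hc hs
  rw [hm] at hc hs
  by_cases h : i.val % 2 = 0 <;> simp [h, hc, hs] <;> ring

lemma blockRot_sub_pi (k : ℕ) (t : ℝ) (x : EuclideanSpace ℝ (Fin (2 * k + 2))) :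
    blockRot k (t - π) x = -blockRot k t x := by
  have := blockRot_add_pi k (t - π) x
  rw [sub_add_cancel] at this
  rw [this, neg_neg]

lemma sphDist_neg {n : ℕ} (x y : EuclideanSpace ℝ (Fin n)) :
    sphDist x (-y) = π - sphDist x y := by
  simp [sphDist, inner_neg_right, Real.arccos_neg]

/-- Condition `B(δ)` implies condition `A(δ)`: if for all `q, q' ∈ F(0)` and all `t`
with `|t| ∈ [δ, π]` one has `d₁(0,t) ≤ d_{2k+1}(q, T_t q') + δ`, then for all
`q, q' ∈ F(0)` and all `t` with `|t| ≤ π − δ` one has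
`d_{2k+1}(q, T_t q') ≤ d₁(0,t) + δ`.  (For `|t| ≤ π` one has `d₁(0,t) = |t|`.) -/
theorem stmt18 (k : ℕ) (hk : 1 ≤ k) (δ : ℝ) (hδ : δ ∈ Set.Icc (0 : ℝ) π)
    (hB : ∀ q ∈ fiberTMC k, ∀ q' ∈ fiberTMC k, ∀ t : ℝ,
      δ ≤ |t| → |t| ≤ π → |t| ≤ sphDist q (blockRot k t q') + δ) :
    ∀ q ∈ fiberTMC k, ∀ q' ∈ fiberTMC k, ∀ t : ℝ,
      |t| ≤ π - δ → sphDist q (blockRot k t q') ≤ |t| + δ := by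
  intro q hq q' hq' t ht
  have hδ0 := hδ.1
  have hδπ := hδ.2
  have hπ := Real.pi_pos
  rcases le_or_gt 0 t with h0 | h0
  · rw [abs_of_nonneg h0] at ht ⊢
    have habs : |t - π| = π - t := by
      rw [abs_of_nonpos (by linarith)]; ring
    have hB' := hB q hq q' hq' (t - π) (by rw [habs]; linarith) (by rw [habs]; linarith)
    rw [habs, blockRot_sub_pi, sphDist_neg] at hB'
    linarith
  · rw [abs_of_neg h0] at ht ⊢
    have habs : |t + π| = t + π := by
      rw [abs_of_nonneg (by linarith)]
    have hB' := hB q hq q' hq' (t + π) (by rw [habs]; linarith) (by rw [habs]; linarith)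
    rw [habs, blockRot_add_pi, sphDist_neg] at hB'
    linarith
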